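/- arXiv:2012.00853 — 9 statements merged into one kernel-verified Lean document; each statement's English description precedes it below -/
import Mathlib

section
/- Let U : 𝒜 ⥤ ℬ be a local right adjoint, B an object of ℬ, and f₁ : B → U(A₁), f₂ : B → U(A₂) morphisms of ℬ. If there is a morphism u : A_{f₁} → A_{f₂} in 𝒜 such that U(u) ∘ η^{A₁}_{f₁} = η^{A₂}_{f₂} (i.e. u relates the two local units as objects of B ↓ U), then u is an isomorphism. -/
/-! By the universal property of `η f₂`, any morphism `u` of `B ↓ U` between the local units has a
section `v` which is again a morphism of `B ↓ U` between them; applying this to `v` shows that `v`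
is also split epi, hence an isomorphism with inverse `u`. -/

open CategoryTheory CategoryTheory.Limits

universe v u₁ u₂

namespace Diers

variable {𝒜 : Type u₁} {ℬ : Type u₂} [Category.{v} 𝒜] [Category.{v} ℬ]

/-- The data of a *local right adjoint* `U : 𝒜 ⥤ ℬ`, given pointwise: for every
`f : B ⟶ U.obj A` (an object of the slice `ℬ/U(A)`), a universal arrow consisting of
the object `A_f = vertex f`, the morphism `L_A(f) = L f : A_f ⟶ A` (the value of the
left adjoint `L_A` of `U/A : 𝒜/A ⥤ ℬ/U(A)`) and the local unit `η^A_f = η f`,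
satisfying `U(L_A(f)) ∘ η^A_f = f` together with the universal property expressing the
adjunction `L_A ⊣ U/A`: any factorization `f = U(u) ∘ g` through `u : A' ⟶ A` is
induced by a unique morphism `w : A_f ⟶ A'` over `A`. -/
structure LocalAdjunction (U : 𝒜 ⥤ ℬ) where
  vertex : ∀ {B : ℬ} {A : 𝒜}, (B ⟶ U.obj A) → 𝒜
  L : ∀ {B : ℬ} {A : 𝒜} (f : B ⟶ U.obj A), vertex f ⟶ A
  η : ∀ {B : ℬ} {A : 𝒜} (f : B ⟶ U.obj A), B ⟶ U.obj (vertex f)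
  fac : ∀ {B : ℬ} {A : 𝒜} (f : B ⟶ U.obj A), η f ≫ U.map (L f) = f
  lift : ∀ {B : ℬ} {A A' : 𝒜} (f : B ⟶ U.obj A) (u : A' ⟶ A) (g : B ⟶ U.obj A'),
      g ≫ U.map u = f → (vertex f ⟶ A')
  lift_comp : ∀ {B : ℬ} {A A' : 𝒜} (f : B ⟶ U.obj A) (u : A' ⟶ A) (g : B ⟶ U.obj A')
      (h : g ≫ U.map u = f), lift f u g h ≫ u = L f
  η_lift : ∀ {B : ℬ} {A A' : 𝒜} (f : B ⟶ U.obj A) (u : A' ⟶ A) (g : B ⟶ U.obj A')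
      (h : g ≫ U.map u = f), η f ≫ U.map (lift f u g h) = g
  lift_uniq : ∀ {B : ℬ} {A A' : 𝒜} (f : B ⟶ U.obj A) (u : A' ⟶ A) (g : B ⟶ U.obj A')
      (h : g ≫ U.map u = f) (w : vertex f ⟶ A'),
      w ≫ u = L f → η f ≫ U.map w = g → w = lift f u g h

/-- Both `w` and `𝟙` are lifts of `f` through `L f` along `η f`, so they agree by uniqueness. -/
theorem LocalAdjunction.eq_id_of_comp_L_of_η_comp {U : 𝒜 ⥤ ℬ} (D : LocalAdjunction U)
    {B : ℬ} {A : 𝒜} {f : B ⟶ U.obj A} (w : D.vertex f ⟶ D.vertex f)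
    (hL : w ≫ D.L f = D.L f) (hη : D.η f ≫ U.map w = D.η f) : w = 𝟙 _ :=
  (D.lift_uniq f _ _ (D.fac f) w hL hη).trans
    (D.lift_uniq f _ _ (D.fac f) (𝟙 _) (Category.id_comp _) (by simp)).symm

/-- The section is the lift of `f₂ = U(u ≫ L f₂) ∘ η f₁` along `u ≫ L f₂`. -/
theorem LocalAdjunction.exists_comp_eq_id_of_η_comp_eq {U : 𝒜 ⥤ ℬ} (D : LocalAdjunction U)
    {B : ℬ} {A₁ A₂ : 𝒜} {f₁ : B ⟶ U.obj A₁} {f₂ : B ⟶ U.obj A₂}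
    (u : D.vertex f₁ ⟶ D.vertex f₂) (h : D.η f₁ ≫ U.map u = D.η f₂) :
    ∃ v : D.vertex f₂ ⟶ D.vertex f₁, v ≫ u = 𝟙 _ ∧ D.η f₂ ≫ U.map v = D.η f₁ := by
  have hfac : D.η f₁ ≫ U.map (u ≫ D.L f₂) = f₂ := by
    rw [U.map_comp, ← Category.assoc, h, D.fac]
  set v := D.lift f₂ (u ≫ D.L f₂) (D.η f₁) hfac
  refine ⟨v, D.eq_id_of_comp_L_of_η_comp _ ?_ ?_, D.η_lift _ _ _ _⟩
  · rw [Category.assoc]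
    exact D.lift_comp _ _ _ _
  · rw [U.map_comp, ← Category.assoc, D.η_lift, h]

/-- **Local units related by a morphism in the range of `U` are isomorphic.**
Let `U : 𝒜 ⥤ ℬ` be a local right adjoint, `B` an object of `ℬ` and
`f₁ : B ⟶ U(A₁)`, `f₂ : B ⟶ U(A₂)`. If `u : A_{f₁} ⟶ A_{f₂}` is a morphism of `𝒜`
with `U(u) ∘ η^{A₁}_{f₁} = η^{A₂}_{f₂}` (i.e. `u` is a morphism of `B ↓ U` between the
two local units), then `u` is an isomorphism. -/
theorem units_form_a_set (U : 𝒜 ⥤ ℬ) (D : LocalAdjunction U)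
    {B : ℬ} {A₁ A₂ : 𝒜} (f₁ : B ⟶ U.obj A₁) (f₂ : B ⟶ U.obj A₂)
    (u : D.vertex f₁ ⟶ D.vertex f₂) (h : D.η f₁ ≫ U.map u = D.η f₂) :
    IsIso u := by
  obtain ⟨v, hvu, hv⟩ := D.exists_comp_eq_id_of_η_comp_eq u h
  obtain ⟨w, hwv, -⟩ := D.exists_comp_eq_id_of_η_comp_eq v hv
  have hwu : w = u := by
    calc w = w ≫ v ≫ u := by rw [hvu, Category.comp_id]
      _ = u := by rw [← Category.assoc, hwv, Category.id_comp]
  exact ⟨v, hwu ▸ hwv, hvu⟩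

end Diers
end

section
/- Let U : 𝒜 ⥤ ℬ be a right multi-adjoint. Then for every object B of ℬ, the co-nerve functor 𝒩^U_B = ℬ(B, U(−)) : 𝒜 ⥤ Set decomposes as a coproduct of corepresentable functors: 𝒩^U_B ≅ ∐_{i ∈ I_B} 𝒜(A_i, −), where (n_i : B → U(A_i))_{i ∈ I_B} is the small multi-initial family of local units under B. -/
/-! Multi-initiality of the local units in `B ↓ U` says exactly that every `g : B ⟶ U A`
factors as `nᵢ ≫ U u` for a unique pair `⟨i, u⟩`. Hence the natural map
`∐ᵢ 𝒜(Aᵢ, A) → ℬ(B, U A)`, `⟨i, u⟩ ↦ nᵢ ≫ U u`, is bijective at every `A`. -/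

open CategoryTheory CategoryTheory.Limits

universe v u₁ u₂

namespace Diers

variable {𝒜 : Type u₁} {ℬ : Type u₂} [Category.{v} 𝒜] [Category.{v} ℬ]

/-- A family `X : I → 𝒞` is *multi-initial* if for every object `C` of `𝒞` there is a
unique index `i : I` and a unique arrow `X i ⟶ C` (uniqueness of the pair `⟨i, f⟩`). -/
def IsMultiInitialFamily {𝒞 : Type*} [Category 𝒞] {I : Type*} (X : I → 𝒞) : Prop :=
  ∀ C : 𝒞, ∃ p : Σ i : I, X i ⟶ C, ∀ q : Σ i : I, X i ⟶ C, q = p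

/-- `U : 𝒜 ⥤ ℬ` is a *right multi-adjoint* if for every `B : ℬ` the comma category
`B ↓ U` admits a small multi-initial family. -/
def IsRightMultiAdjoint (U : 𝒜 ⥤ ℬ) : Prop :=
  ∀ B : ℬ, ∃ (I : Type v) (n : I → StructuredArrow B U), IsMultiInitialFamily n

/-- The coproduct `∐_{i ∈ I} 𝒜(X i, −) : 𝒜 ⥤ Set` of the corepresentable functors of a
small family of objects `X : I → 𝒜`, computed pointwise as a sigma type. -/
def sigmaCorepresentable {I : Type v} (X : I → 𝒜) : 𝒜 ⥤ Type v where
  obj A := Σ i : I, X i ⟶ A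
  map f := TypeCat.ofHom fun p => ⟨p.1, p.2 ≫ f⟩
  map_id A := by ext p; cases p; simp; exact heq_of_eq (by simp)
  map_comp f g := by ext p; cases p; simp; exact heq_of_eq (by simp)

theorem IsMultiInitialFamily.nonempty {𝒞 : Type*} [Category 𝒞] {I : Type*} {X : I → 𝒞}
    (hX : IsMultiInitialFamily X) (C : 𝒞) : Nonempty (Σ i : I, X i ⟶ C) :=
  let ⟨p, _⟩ := hX C; ⟨p⟩

theorem IsMultiInitialFamily.subsingleton {𝒞 : Type*} [Category 𝒞] {I : Type*} {X : I → 𝒞}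
    (hX : IsMultiInitialFamily X) (C : 𝒞) : Subsingleton (Σ i : I, X i ⟶ C) :=
  let ⟨_, hp⟩ := hX C; ⟨fun q r => (hp q).trans (hp r).symm⟩

section Conerve

variable {B : ℬ} {U : 𝒜 ⥤ ℬ} {I : Type v}

def sigmaCorepresentableToConerve (n : I → StructuredArrow B U) :
    sigmaCorepresentable (fun i => (n i).right) ⟶ U ⋙ coyoneda.obj (Opposite.op B) where
  app A := TypeCat.ofHom fun p => (n p.1).hom ≫ U.map p.2
  naturality A A' f := by
    ext ⟨i, u⟩
    simp [sigmaCorepresentable]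

theorem sigmaCorepresentableToConerve_app_bijective {n : I → StructuredArrow B U}
    (hn : IsMultiInitialFamily n) (A : 𝒜) :
    Function.Bijective ((sigmaCorepresentableToConerve n).app A) := by
  constructor
  · rintro ⟨i, u⟩ ⟨j, v⟩ (huv : (n i).hom ≫ U.map u = (n j).hom ≫ U.map v)
    have hpair := (hn.subsingleton (StructuredArrow.mk ((n i).hom ≫ U.map u))).elim
      ⟨i, StructuredArrow.homMk u rfl⟩ ⟨j, StructuredArrow.homMk v huv.symm⟩
    exact congrArg (fun q => (⟨q.1, q.2.right⟩ : Σ k : I, (n k).right ⟶ A)) hpair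
  · intro g
    obtain ⟨i, f⟩ := hn.nonempty (StructuredArrow.mk g)
    exact ⟨⟨i, f.right⟩, StructuredArrow.w f⟩

end Conerve

theorem conerve_iso_coproduct_corepresentables_general (U : 𝒜 ⥤ ℬ)
    (B : ℬ) {I : Type v}
    (n : I → StructuredArrow B U) (hn : IsMultiInitialFamily n) :
    Nonempty ((U ⋙ coyoneda.obj (Opposite.op B)) ≅
      sigmaCorepresentable (fun i => (n i).right)) := by
  have (A : 𝒜) : IsIso ((sigmaCorepresentableToConerve n).app A) :=
    (isIso_iff_bijective _).2 (sigmaCorepresentableToConerve_app_bijective hn A)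
  have := NatIso.isIso_of_isIso_app (sigmaCorepresentableToConerve n)
  exact ⟨(asIso (sigmaCorepresentableToConerve n)).symm⟩

/-- **The co-nerve of a right multi-adjoint is a coproduct of corepresentables.**
Let `U : 𝒜 ⥤ ℬ` be a right multi-adjoint and `B : ℬ`, with small multi-initial family
of local units `(nᵢ : B ⟶ U(Aᵢ))_{i ∈ I}` in `B ↓ U`. Then the co-nerve
`𝒩^U_B = ℬ(B, U(−)) : 𝒜 ⥤ Set` is isomorphic to `∐_{i ∈ I} 𝒜(Aᵢ, −)`. -/
theorem conerve_iso_coproduct_corepresentables (U : 𝒜 ⥤ ℬ)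
    (hU : IsRightMultiAdjoint U) (B : ℬ) {I : Type v}
    (n : I → StructuredArrow B U) (hn : IsMultiInitialFamily n) :
    Nonempty ((U ⋙ coyoneda.obj (Opposite.op B)) ≅
      sigmaCorepresentable (fun i => (n i).right)) :=
  conerve_iso_coproduct_corepresentables_general U B n hn

end Diers
end

section
/- Let U : 𝒜 ↪ ℬ be a full multireflective subcategory inclusion (a fully faithful right multi-adjoint). If ℬ has all small colimits, then 𝒜 has multicolimits of all small diagrams: for every small diagram F : I ⥤ 𝒜, the composites of the colimit cocone of U∘F in ℬ with the local units under colim U∘F lift along the fully faithful U to a small family of cocones over F in 𝒜 which is multi-initial in the category of cocones over F. -/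
/-!
Since `U` is fully faithful, a cocone over `F` with vertex `A` is the same as a cocone over
`U ∘ F` with vertex `U A`, i.e. an arrow `colim (U ∘ F) ⟶ U A`. So the category of cocones
over `F` embeds fully faithfully into the comma category `colim (U ∘ F) ↓ U`, every local unit
lies in the image, and the local units therefore pull back to a multi-initial family of cocones.
-/

open CategoryTheory CategoryTheory.Limits

universe v u₁ u₂

namespace Diers

variable {𝒜 : Type u₁} {ℬ : Type u₂} [Category.{v} 𝒜] [Category.{v} ℬ]

namespace IsMultiInitialFamily

variable {𝒞 𝒟 : Type*} [Category 𝒞] [Category 𝒟] {ι κ : Type*}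

theorem of_sigmaEquiv {X : ι → 𝒞} {Y : κ → 𝒟} (hX : IsMultiInitialFamily X) (D : 𝒟 → 𝒞)
    (e : ∀ C, (Σ i, X i ⟶ D C) ≃ (Σ j, Y j ⟶ C)) : IsMultiInitialFamily Y := by
  intro C
  obtain ⟨p, hp⟩ := hX (D C)
  exact ⟨e C p, fun q => by rw [← (e C).apply_symm_apply q, hp ((e C).symm q)]⟩

theorem of_fullyFaithful {X : ι → 𝒞} {Y : ι → 𝒟} {Ψ : 𝒞 ⥤ 𝒟} (hΨ : Ψ.FullyFaithful)
    (hY : IsMultiInitialFamily Y) (e : ∀ i, Ψ.obj (X i) ≅ Y i) : IsMultiInitialFamily X :=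
  hY.of_sigmaEquiv Ψ.obj fun _ =>
    Equiv.sigmaCongrRight fun i => ((e i).homCongr (Iso.refl _)).symm.trans hΨ.homEquiv.symm

end IsMultiInitialFamily

section CoconesAsStructuredArrows

variable {I : Type*} [Category I] {U : 𝒜 ⥤ ℬ} {F : I ⥤ 𝒜} (t : Cocone (F ⋙ U))

@[simps]
def coconeOfStructuredArrow (hU : U.FullyFaithful) (n : StructuredArrow t.pt U) : Cocone F where
  pt := n.right
  ι :=
    { app := fun i => hU.preimage (t.ι.app i ≫ n.hom)
      naturality := fun i i' f => hU.map_injective <| by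
        simp only [Functor.map_comp, Functor.FullyFaithful.map_preimage, Functor.const_obj_obj,
          Functor.const_obj_map, Category.comp_id, ← Category.assoc]
        exact congrArg (· ≫ n.hom) (t.w f) }

variable {t} (ht : IsColimit t)

theorem ι_desc_mapCocone (s : Cocone F) (i : I) :
    t.ι.app i ≫ ht.desc (U.mapCocone s) = U.map (s.ι.app i) :=
  ht.fac (U.mapCocone s) i

theorem desc_mapCocone_comp_map {s s' : Cocone F} {g : s.pt ⟶ s'.pt}
    (hg : ∀ i, s.ι.app i ≫ g = s'.ι.app i) :
    ht.desc (U.mapCocone s) ≫ U.map g = ht.desc (U.mapCocone s') :=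
  ht.hom_ext fun i => by
    rw [← Category.assoc, ι_desc_mapCocone, ι_desc_mapCocone, ← U.map_comp, hg]

theorem cocone_w_of_desc_mapCocone_comp_map [U.Faithful] {s s' : Cocone F} {g : s.pt ⟶ s'.pt}
    (hg : ht.desc (U.mapCocone s) ≫ U.map g = ht.desc (U.mapCocone s')) (i : I) :
    s.ι.app i ≫ g = s'.ι.app i :=
  U.map_injective <| by
    rw [U.map_comp, ← ι_desc_mapCocone ht, Category.assoc, hg, ι_desc_mapCocone]

def structuredArrowOfCocone : Cocone F ⥤ StructuredArrow t.pt U where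
  obj s := StructuredArrow.mk (ht.desc (U.mapCocone s))
  map f := StructuredArrow.homMk f.hom (desc_mapCocone_comp_map ht f.w)

noncomputable def fullyFaithfulStructuredArrowOfCocone [U.Faithful] :
    (structuredArrowOfCocone ht).FullyFaithful where
  preimage {s s'} f :=
    { hom := f.right
      w := cocone_w_of_desc_mapCocone_comp_map ht (StructuredArrow.w f) }

theorem desc_mapCocone_coconeOfStructuredArrow (hU : U.FullyFaithful)
    (n : StructuredArrow t.pt U) :
    ht.desc (U.mapCocone (coconeOfStructuredArrow t hU n)) = n.hom :=
  ht.hom_ext fun i => by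
    rw [ι_desc_mapCocone, coconeOfStructuredArrow_ι_app]
    exact hU.map_preimage _

noncomputable def structuredArrowOfCoconeObjIso (hU : U.FullyFaithful)
    (n : StructuredArrow t.pt U) :
    (structuredArrowOfCocone ht).obj (coconeOfStructuredArrow t hU n) ≅ n :=
  StructuredArrow.isoMk (Iso.refl _) <| by
    erw [U.map_id, Category.comp_id]
    exact desc_mapCocone_coconeOfStructuredArrow ht hU n

end CoconesAsStructuredArrows

/-- **Multicolimits in a full multireflective subcategory.**
Let `U : 𝒜 ↪ ℬ` be a full multireflective subcategory inclusion, i.e. a fully faithful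
right multi-adjoint. If `ℬ` has all small colimits then `𝒜` has multicolimits of all
small diagrams: every small diagram `F : I ⥤ 𝒜` admits a small family of cocones which
is multi-initial in the category of cocones over `F` (obtained by lifting along the
fully faithful `U` the composites of the colimit cocone of `U ∘ F` with the local units
under `colim U ∘ F`). -/
theorem multicolimits_of_full_multireflective (U : 𝒜 ⥤ ℬ) [U.Full] [U.Faithful]
    (hU : IsRightMultiAdjoint U) [HasColimitsOfSize.{v, v} ℬ]
    {I : Type v} [SmallCategory I] (F : I ⥤ 𝒜) :
    ∃ (J : Type v) (c : J → Cocone F), IsMultiInitialFamily c := by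
  obtain ⟨J, n, hn⟩ := hU (colimit (F ⋙ U))
  let ht := colimit.isColimit (F ⋙ U)
  let hUff := Functor.FullyFaithful.ofFullyFaithful U
  exact ⟨J, fun j => coconeOfStructuredArrow _ hUff (n j),
    hn.of_fullyFaithful (fullyFaithfulStructuredArrowOfCocone ht)
      fun j => structuredArrowOfCoconeObjIso ht hUff (n j)⟩

end Diers
end

section
/- Let U : 𝒜 ↪ ℬ be a full multireflective subcategory inclusion (a fully faithful right multi-adjoint). If ℬ has all small limits, then 𝒜 has all connected limits and they are created by U: for every small connected category I and diagram F : I ⥤ 𝒜, all the limit projections of lim U∘F in ℬ factor through a common local unit n_F : lim U∘F → U(A_F), the resulting cone over F in 𝒜 is a limit cone, and n_F is an isomorphism. -/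
open CategoryTheory CategoryTheory.Limits

universe v u₁ u₂

namespace Diers

variable {𝒜 : Type u₁} {ℬ : Type u₂} [Category.{v} 𝒜] [Category.{v} ℬ]

/-!
Local units under a fixed object are members of a multi-initial family, so the index of the local
unit through which an arrow factors is invariant along morphisms of the comma category. Over a
connected diagram it is therefore constant: the limit projections of `lim U∘F` all factor through
one local unit `n j`, giving a cone over `F` with apex `(n j).right`. The comparison map back into
`lim U∘F` is a retraction of `(n j).hom`, and fullness together with the uniqueness of maps out of
a local unit makes it an inverse, so `U` sends that cone to a limit cone, which it reflects.
-/

namespace IsMultiInitialFamily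

section

variable {𝒞 : Type*} [Category 𝒞] {J : Type*} {X : J → 𝒞} (hX : IsMultiInitialFamily X)
include hX

theorem sigma_ext {C : 𝒞} (p q : Σ j, X j ⟶ C) : p = q := by
  obtain ⟨r, hr⟩ := hX C
  rw [hr p, hr q]

theorem hom_ext {j : J} {C : 𝒞} (f g : X j ⟶ C) : f = g :=
  eq_of_heq (Sigma.mk.inj (hX.sigma_ext ⟨j, f⟩ ⟨j, g⟩)).2

theorem index_eq {j j' : J} {C : 𝒞} (f : X j ⟶ C) (g : X j' ⟶ C) : j = j' :=
  congrArg Sigma.fst (hX.sigma_ext ⟨j, f⟩ ⟨j', g⟩)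

theorem exists_nonempty_cone {I : Type*} [Category I] [IsConnected I] (G : I ⥤ 𝒞) :
    ∃ j, Nonempty ((Functor.const I).obj (X j) ⟶ G) := by
  choose p _ using fun i => hX (G.obj i)
  have index_const : ∀ i i', (p i).1 = (p i').1 :=
    constant_of_preserves_morphisms _ fun i i' φ => hX.index_eq ((p i).2 ≫ G.map φ) (p i').2
  obtain ⟨i₀⟩ : Nonempty I := inferInstance
  exact ⟨(p i₀).1,
    ⟨⟨fun i => eqToHom (congrArg X (index_const i₀ i)) ≫ (p i).2, fun _ _ _ => hX.hom_ext _ _⟩⟩⟩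

end

section

variable {𝒜 : Type u₁} {ℬ : Type u₂} [Category.{v} 𝒜] [Category.{v} ℬ] {U : 𝒜 ⥤ ℬ} {B : ℬ}
  {J : Type*} {n : J → StructuredArrow B U}

theorem isIso_hom_of_retraction [U.Full] (hn : IsMultiInitialFamily n) {j : J}
    (r : U.obj (n j).right ⟶ B) (hr : (n j).hom ≫ r = 𝟙 B) : IsIso (n j).hom := by
  have fixes_unit : (n j).hom ≫ U.map (U.preimage (r ≫ (n j).hom)) = (n j).hom := by
    rw [U.map_preimage, ← Category.assoc, hr, Category.id_comp]
  have endo_eq_id := congrArg CommaMorphism.right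
    (hn.hom_ext (StructuredArrow.homMk (U.preimage (r ≫ (n j).hom)) fixes_unit) (𝟙 (n j)))
  refine ⟨r, hr, ?_⟩
  simpa using congrArg U.map endo_eq_id

variable {I : Type*} [Category I] {F : I ⥤ 𝒜}

theorem exists_factorization_of_isConnected [IsConnected I] (c : Cone (F ⋙ U))
    {n : J → StructuredArrow c.pt U} (hn : IsMultiInitialFamily n) :
    ∃ (j : J) (π : (Functor.const I).obj ((n j).right) ⟶ F),
      ∀ i, (n j).hom ≫ U.map (π.app i) = c.π.app i := by
  obtain ⟨j, ⟨π⟩⟩ := hn.exists_nonempty_cone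
    (F.toStructuredArrow c.pt U c.π.app fun g => by simpa using c.w g)
  exact ⟨j, Functor.whiskerRight π (StructuredArrow.proj c.pt U), fun i =>
    StructuredArrow.w (π.app i)⟩

theorem isIso_hom_of_factorization [U.Full] {c : Cone (F ⋙ U)} (hc : IsLimit c)
    {n : J → StructuredArrow c.pt U} (hn : IsMultiInitialFamily n) {j : J}
    {π : (Functor.const I).obj ((n j).right) ⟶ F}
    (hπ : ∀ i, (n j).hom ≫ U.map (π.app i) = c.π.app i) : IsIso (n j).hom :=
  hn.isIso_hom_of_retraction (hc.lift (U.mapCone ⟨_, π⟩))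
    (hc.hom_ext fun i => by simp [hπ])

theorem exists_isLimit_of_isConnected [IsConnected I] [U.Full] [U.Faithful]
    {c : Cone (F ⋙ U)} (hc : IsLimit c) {n : J → StructuredArrow c.pt U}
    (hn : IsMultiInitialFamily n) :
    ∃ (j : J) (π : (Functor.const I).obj ((n j).right) ⟶ F),
      (∀ i, (n j).hom ≫ U.map (π.app i) = c.π.app i) ∧ IsIso (n j).hom ∧
        Nonempty (IsLimit (⟨(n j).right, π⟩ : Cone F)) := by
  obtain ⟨j, π, hπ⟩ := exists_factorization_of_isConnected c hn
  have := isIso_hom_of_factorization hc hn hπ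
  refine ⟨j, π, hπ, this, ⟨isLimitOfReflects U ?_⟩⟩
  exact IsLimit.ofIsoLimit hc (Cone.ext (asIso (n j).hom) fun i => (hπ i).symm)

end

end IsMultiInitialFamily

theorem IsRightMultiAdjoint.nonempty_createsLimitsOfShape {U : 𝒜 ⥤ ℬ} [U.Full] [U.Faithful]
    (hU : IsRightMultiAdjoint U) (I : Type*) [Category I] [IsConnected I]
    [HasLimitsOfShape I ℬ] : Nonempty (CreatesLimitsOfShape I U) :=
  ⟨⟨fun {F} => Classical.choice <| by
    obtain ⟨J, n, hn⟩ := hU (limit (F ⋙ U))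
    obtain ⟨j, -, -, _, -⟩ := hn.exists_isLimit_of_isConnected (limit.isLimit (F ⋙ U))
    exact ⟨createsLimitOfFullyFaithfulOfIso (n j).right (asIso (n j).hom).symm⟩⟩⟩

/-- **Connected limits in a full multireflective subcategory.**
Let `U : 𝒜 ↪ ℬ` be a full multireflective subcategory inclusion (a fully faithful
right multi-adjoint) and suppose `ℬ` has all small limits. Then for every small
connected category `I`:
* `𝒜` has limits of shape `I` and they are created by `U`, and
* for every diagram `F : I ⥤ 𝒜` and every multi-initial family `n` of local units
  under `lim U∘F` in `(lim U∘F) ↓ U`, all the limit projections of `lim U∘F` factor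
  through a common local unit `n j` via a cone `π` over `F` in `𝒜`, this cone is a
  limit cone, and `n j` is an isomorphism. -/
theorem connected_limits_of_full_multireflective (U : 𝒜 ⥤ ℬ) [U.Full] [U.Faithful]
    (hU : IsRightMultiAdjoint U) [HasLimitsOfSize.{v, v} ℬ]
    (I : Type v) [SmallCategory I] [CategoryTheory.IsConnected I] :
    HasLimitsOfShape I 𝒜 ∧ Nonempty (CreatesLimitsOfShape I U) ∧
    (∀ (F : I ⥤ 𝒜) {J : Type v} (n : J → StructuredArrow (limit (F ⋙ U)) U),
      IsMultiInitialFamily n →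
      ∃ (j : J) (π : (Functor.const I).obj ((n j).right) ⟶ F),
        (∀ i : I, (n j).hom ≫ U.map (π.app i) = limit.π (F ⋙ U) i) ∧
        IsIso (n j).hom ∧
        Nonempty (IsLimit (⟨(n j).right, π⟩ : Cone F))) := by
  obtain ⟨creates⟩ := hU.nonempty_createsLimitsOfShape I
  exact ⟨hasLimitsOfShape_of_hasLimitsOfShape_createsLimitsOfShape U, ⟨creates⟩,
    fun F _ _ hn => hn.exists_isLimit_of_isConnected (limit.isLimit (F ⋙ U))⟩

end Diers
end

section
/- Let U : 𝒜 ⥤ ℬ be a functor and B an object of ℬ. (i) If n₁ : B → U(A₁) and n₂ : B → U(A₂) are candidates for U and there is u : A₂ → A₁ in 𝒜 with U(u) ∘ n₂ = n₁, then u is an isomorphism (so n₁ and n₂ are isomorphic in B ↓ U). (ii) Consequently, if a morphism f : B → U(A) admits a stable factorization f = U(u_f) ∘ n_f with n_f a candidate, this factorization is unique up to a unique isomorphism. -/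
open CategoryTheory CategoryTheory.Limits

universe v u₁ u₂

namespace Diers

variable {𝒜 : Type u₁} {ℬ : Type u₂} [Category.{v} 𝒜] [Category.{v} ℬ]

/-- A morphism `n : B ⟶ U(A)` is a *candidate* (diagonally universal toward `U`) if for
every `f : B ⟶ U(A₁)`, `v : A₁ ⟶ A₂` and `u : A ⟶ A₂` with `U(v) ∘ f = U(u) ∘ n`,
there exists a unique `w : A ⟶ A₁` in `𝒜` with `v ∘ w = u` and `U(w) ∘ n = f`. -/
def IsCandidate (U : 𝒜 ⥤ ℬ) {B : ℬ} {A : 𝒜} (n : B ⟶ U.obj A) : Prop :=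
  ∀ {A₁ A₂ : 𝒜} (f : B ⟶ U.obj A₁) (v : A₁ ⟶ A₂) (u : A ⟶ A₂),
    f ≫ U.map v = n ≫ U.map u → ∃! w : A ⟶ A₁, w ≫ v = u ∧ n ≫ U.map w = f

namespace IsCandidate

variable {U : 𝒜 ⥤ ℬ} {B : ℬ}

theorem hom_ext {A A₁ A₂ : 𝒜} {n : B ⟶ U.obj A} (hn : IsCandidate U n) {v : A₁ ⟶ A₂}
    {w₁ w₂ : A ⟶ A₁} (hv : w₁ ≫ v = w₂ ≫ v) (hU : n ≫ U.map w₁ = n ≫ U.map w₂) :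
    w₁ = w₂ :=
  (hn (n ≫ U.map w₂) v (w₂ ≫ v) (by simp)).unique ⟨hv, hU⟩ ⟨rfl, rfl⟩

/-- Candidacy of `n₁` splits `u`; candidacy of `n₂` forces the splitting to be two-sided. -/
theorem isIso_of_comp_map_eq {A₁ A₂ : 𝒜} {n₁ : B ⟶ U.obj A₁} {n₂ : B ⟶ U.obj A₂}
    (h₁ : IsCandidate U n₁) (h₂ : IsCandidate U n₂) {u : A₂ ⟶ A₁}
    (hu : n₂ ≫ U.map u = n₁) : IsIso u := by
  obtain ⟨w, hwu, hnw⟩ := (h₁ n₂ u (𝟙 A₁) (by simp [hu])).exists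
  have huw : u ≫ w = 𝟙 A₂ :=
    h₂.hom_ext (v := u) (by simp [hwu]) (by rw [U.map_comp, reassoc_of% hu, hnw]; simp)
  exact ⟨w, huw, hwu⟩

theorem existsUnique_comparison {A C₁ C₂ : 𝒜} {n₁ : B ⟶ U.obj C₁} {n₂ : B ⟶ U.obj C₂}
    (h₁ : IsCandidate U n₁) {u₁ : C₁ ⟶ A} {u₂ : C₂ ⟶ A}
    (h : n₁ ≫ U.map u₁ = n₂ ≫ U.map u₂) :
    ∃! w : C₁ ⟶ C₂, n₁ ≫ U.map w = n₂ ∧ w ≫ u₂ = u₁ := by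
  simpa only [and_comm] using h₁ n₂ u₂ u₁ h.symm

end IsCandidate

/-- **Uniqueness of candidates and of stable factorizations.**
(i) If `n₁ : B ⟶ U(A₁)` and `n₂ : B ⟶ U(A₂)` are candidates and `u : A₂ ⟶ A₁` satisfies
`U(u) ∘ n₂ = n₁` (a morphism of `B ↓ U` between them), then `u` is an isomorphism.
(ii) Consequently, a stable factorization `f = U(u_f) ∘ n_f` (with `n_f` a candidate) of
a morphism `f : B ⟶ U(A)` is unique up to a unique isomorphism: given two such
factorizations there is a unique comparison morphism `w` compatible with both, and any
such comparison morphism is an isomorphism. -/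
theorem candidates_unique_and_stable_factorization_unique (U : 𝒜 ⥤ ℬ) :
    (∀ {B : ℬ} {A₁ A₂ : 𝒜} (n₁ : B ⟶ U.obj A₁) (n₂ : B ⟶ U.obj A₂),
        IsCandidate U n₁ → IsCandidate U n₂ →
        ∀ u : A₂ ⟶ A₁, n₂ ≫ U.map u = n₁ → IsIso u) ∧
    (∀ {B : ℬ} {A C₁ C₂ : 𝒜} (f : B ⟶ U.obj A)
        (n₁ : B ⟶ U.obj C₁) (u₁ : C₁ ⟶ A) (n₂ : B ⟶ U.obj C₂) (u₂ : C₂ ⟶ A),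
        IsCandidate U n₁ → IsCandidate U n₂ →
        n₁ ≫ U.map u₁ = f → n₂ ≫ U.map u₂ = f →
        (∃! w : C₁ ⟶ C₂, n₁ ≫ U.map w = n₂ ∧ w ≫ u₂ = u₁) ∧
        (∀ w : C₁ ⟶ C₂, n₁ ≫ U.map w = n₂ ∧ w ≫ u₂ = u₁ → IsIso w)) :=
  ⟨fun _ _ h₁ h₂ _ hu => h₁.isIso_of_comp_map_eq h₂ hu,
    fun _ _ _ _ _ h₁ h₂ hf₁ hf₂ =>
      ⟨h₁.existsUnique_comparison (hf₁.trans hf₂.symm),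
        fun _ hw => h₂.isIso_of_comp_map_eq h₁ hw.1⟩⟩

end Diers
end

section
/- A functor U : 𝒜 ⥤ ℬ is stable if and only if it is a local right adjoint. More precisely: if U is stable, then for each object A of 𝒜 the assignment sending f : B → U(A) to the right part u_f : A_f → A of its stable factorization defines a left adjoint to U/A : 𝒜/A ⥤ ℬ/U(A); conversely, if U is a local right adjoint, then every local unit η^A_f is a candidate, and the factorization f = U(L_A(f)) ∘ η^A_f is a stable factorization of f. -/
/-!
A local unit `η f` is universal not only for `f` but for every composite `η f ≫ U.map u`:
comparing it with the local unit of `h := η f ≫ U.map u` exhibits `vertex f` as a retract of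
`vertex h` compatibly with the units, so the universal property of `η h` transfers to `η f`.
This is exactly the candidate property, and the factorization `f = η f ≫ U.map (L f)` is
stable. Conversely, the universal property of a candidate `n` with `n ≫ U.map u = f` is that
of a universal arrow from `f` to `U/A`, so stable factorizations are local adjunction data.
-/

open CategoryTheory CategoryTheory.Limits

universe v u₁ u₂

namespace Diers

variable {𝒜 : Type u₁} {ℬ : Type u₂} [Category.{v} 𝒜] [Category.{v} ℬ]

/-- `U` is *stable* if every morphism `f : B ⟶ U(A)` admits a stable factorization
`f = U(u_f) ∘ n_f` with `n_f` a candidate. -/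
def IsStable (U : 𝒜 ⥤ ℬ) : Prop :=
  ∀ {B : ℬ} {A : 𝒜} (f : B ⟶ U.obj A),
    ∃ (Af : 𝒜) (n : B ⟶ U.obj Af) (u : Af ⟶ A), IsCandidate U n ∧ n ≫ U.map u = f

namespace LocalAdjunction

variable {U : 𝒜 ⥤ ℬ} (D : LocalAdjunction U)

theorem hom_ext {B : ℬ} {A A' : 𝒜} {f : B ⟶ U.obj A} {u : A' ⟶ A} {w w' : D.vertex f ⟶ A'}
    (hw : w ≫ u = D.L f) (hw' : w' ≫ u = D.L f) (hη : D.η f ≫ U.map w = D.η f ≫ U.map w') :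
    w = w' := by
  have hg : (D.η f ≫ U.map w) ≫ U.map u = f := by
    rw [Category.assoc, ← U.map_comp, hw, D.fac]
  rw [D.lift_uniq f u _ hg w hw rfl, D.lift_uniq f u _ hg w' hw' hη.symm]

section Retract

variable {B : ℬ} {A A₂ : 𝒜} (f : B ⟶ U.obj A) (u : D.vertex f ⟶ A₂)

def retraction : D.vertex (D.η f ≫ U.map u) ⟶ D.vertex f :=
  D.lift _ u (D.η f) rfl

theorem retraction_comp : D.retraction f u ≫ u = D.L (D.η f ≫ U.map u) :=
  D.lift_comp _ u _ rfl

theorem η_retraction : D.η (D.η f ≫ U.map u) ≫ U.map (D.retraction f u) = D.η f :=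
  D.η_lift _ u _ rfl

theorem η_comp_retraction_comp_L :
    D.η (D.η f ≫ U.map u) ≫ U.map (D.retraction f u ≫ D.L f) = f := by
  rw [U.map_comp, ← Category.assoc, η_retraction, D.fac]

def section_ : D.vertex f ⟶ D.vertex (D.η f ≫ U.map u) :=
  D.lift f _ _ (D.η_comp_retraction_comp_L f u)

theorem η_section : D.η f ≫ U.map (D.section_ f u) = D.η (D.η f ≫ U.map u) :=
  D.η_lift f _ _ _

theorem section_comp_retraction : D.section_ f u ≫ D.retraction f u = 𝟙 _ := by
  refine D.hom_ext (u := D.L f) ?_ (Category.id_comp _) ?_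
  · rw [Category.assoc]
    exact D.lift_comp f _ _ _
  · rw [U.map_comp, ← Category.assoc, η_section, η_retraction, U.map_id, Category.comp_id]

end Retract

theorem isCandidate_η {B : ℬ} {A : 𝒜} (f : B ⟶ U.obj A) : IsCandidate U (D.η f) := by
  intro A₁ A₂ g v u hsq
  set r := D.retraction f u
  set s := D.section_ f u
  have hr := D.section_comp_retraction f u
  refine ⟨s ≫ D.lift _ v g hsq, ⟨?_, ?_⟩, ?_⟩
  · rw [Category.assoc, D.lift_comp, ← D.retraction_comp, ← Category.assoc, hr,
      Category.id_comp]
  · rw [U.map_comp, ← Category.assoc, D.η_section, D.η_lift]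
  · rintro w ⟨hwv, hwη⟩
    have hrw : r ≫ w = D.lift _ v g hsq := by
      refine D.lift_uniq _ v g hsq _ ?_ ?_
      · rw [Category.assoc, hwv, D.retraction_comp]
      · rw [U.map_comp, ← Category.assoc, D.η_retraction, hwη]
    rw [← hrw, ← Category.assoc, hr, Category.id_comp]

theorem isStable (D : LocalAdjunction U) : IsStable U :=
  fun f => ⟨_, _, _, D.isCandidate_η f, D.fac f⟩

noncomputable def ofStableFactorization
    (vertex : ∀ {B : ℬ} {A : 𝒜}, (B ⟶ U.obj A) → 𝒜)
    (L : ∀ {B : ℬ} {A : 𝒜} (f : B ⟶ U.obj A), vertex f ⟶ A)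
    (η : ∀ {B : ℬ} {A : 𝒜} (f : B ⟶ U.obj A), B ⟶ U.obj (vertex f))
    (isCandidate : ∀ {B : ℬ} {A : 𝒜} (f : B ⟶ U.obj A), IsCandidate U (η f))
    (fac : ∀ {B : ℬ} {A : 𝒜} (f : B ⟶ U.obj A), η f ≫ U.map (L f) = f) :
    LocalAdjunction U where
  vertex := vertex
  L := L
  η := η
  fac := fac
  lift f u g h := (isCandidate f g u (L f) (by rw [h, fac])).exists.choose
  lift_comp f u g h := (isCandidate f g u (L f) (by rw [h, fac])).exists.choose_spec.1
  η_lift f u g h := (isCandidate f g u (L f) (by rw [h, fac])).exists.choose_spec.2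
  lift_uniq f u g h w hw hη := (isCandidate f g u (L f) (by rw [h, fac])).unique ⟨hw, hη⟩
    (isCandidate f g u (L f) (by rw [h, fac])).exists.choose_spec

end LocalAdjunction

theorem IsStable.nonempty_localAdjunction {U : 𝒜 ⥤ ℬ} (hU : IsStable U) :
    Nonempty (LocalAdjunction U) := by
  choose V n u isCandidate fac using fun B A (f : B ⟶ U.obj A) => hU f
  exact ⟨.ofStableFactorization (V _ _) (u _ _) (n _ _) (isCandidate _ _) (fac _ _)⟩

/-- **Stable functors and local right adjoints coincide.**
`U : 𝒜 ⥤ ℬ` is stable if and only if it is a local right adjoint (if `U` is stable,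
sending `f : B ⟶ U(A)` to the right part `u_f : A_f ⟶ A` of its stable factorization
provides a left adjoint to `U/A`, i.e. the data of a `LocalAdjunction`); and moreover,
for any local adjunction data for `U`, every local unit `η^A_f` is a candidate, so that
the factorization `f = U(L_A(f)) ∘ η^A_f` is a stable factorization of `f`. -/
theorem isStable_iff_isLocalRightAdjoint (U : 𝒜 ⥤ ℬ) :
    (IsStable U ↔ Nonempty (LocalAdjunction U)) ∧
    (∀ (D : LocalAdjunction U) {B : ℬ} {A : 𝒜} (f : B ⟶ U.obj A),
        IsCandidate U (D.η f)) :=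
  ⟨⟨IsStable.nonempty_localAdjunction, fun ⟨D⟩ => D.isStable⟩,
    fun D _ _ f => D.isCandidate_η f⟩

end Diers
end

section
/- Let 𝒜 be a category. The canonical embedding ι_𝒜 : 𝒜 ↪ Π𝒜 into the free product completion creates connected limits: for every small connected category D and diagram F : D ⥤ 𝒜 admitting a limit in 𝒜, the singleton family ι_𝒜(lim F) is a limit of ι_𝒜 ∘ F in Π𝒜, and a connected cone in 𝒜 whose image under ι_𝒜 is limiting is already limiting. Moreover, Π𝒜 has all small limits if and only if 𝒜 has all small connected limits. -/
open CategoryTheory CategoryTheory.Limits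

universe v u₁ u₂

namespace Diers

/-- An object of the free product completion `Π𝒜` of `𝒜`: a set-indexed family of
objects of `𝒜`. -/
structure FamObj.{w, u} (𝒜 : Type u) : Type (max u (w + 1)) where
  I : Type w
  obj : I → 𝒜

variable {𝒜 : Type u₁} {ℬ : Type u₂} [Category.{v} 𝒜] [Category.{v} ℬ]

/-- A morphism `(Aᵢ)_{i∈I} ⟶ (Bⱼ)_{j∈J}` of the free product completion: a function
`α : J → I` together with a `J`-indexed family of morphisms `A_{α(j)} ⟶ Bⱼ`. -/
structure FamHom (X Y : FamObj.{v} 𝒜) : Type v where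
  idx : Y.I → X.I
  hom : ∀ j : Y.I, X.obj (idx j) ⟶ Y.obj j

theorem FamHom.ext' {X Y : FamObj.{v} 𝒜} {f g : FamHom X Y}
    (h₁ : f.idx = g.idx) (h₂ : HEq f.hom g.hom) : f = g := by
  cases f; cases g; cases h₁; cases h₂; rfl

/-- The free product completion `Π𝒜` of `𝒜`. -/
instance famCategory : Category.{v} (FamObj.{v} 𝒜) where
  Hom := FamHom
  id X := ⟨fun i => i, fun i => 𝟙 (X.obj i)⟩
  comp f g := ⟨fun j => f.idx (g.idx j), fun j => f.hom (g.idx j) ≫ g.hom j⟩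
  id_comp f := FamHom.ext' rfl (heq_of_eq (funext fun j => Category.id_comp (f.hom j)))
  comp_id f := FamHom.ext' rfl (heq_of_eq (funext fun j => Category.comp_id (f.hom j)))
  assoc f g h := FamHom.ext' rfl (heq_of_eq (funext fun j => Category.assoc _ _ _))

/-- The canonical full embedding `ι_𝒜 : 𝒜 ↪ Π𝒜` sending an object to the corresponding
singleton family. -/
def famEmbedding : 𝒜 ⥤ FamObj.{v} 𝒜 where
  obj A := ⟨PUnit.{v + 1}, fun _ => A⟩
  map f := ⟨fun j => j, fun _ => f⟩
  map_id _ := rfl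
  map_comp _ _ := rfl

/-- The free product extension `ΠU : Π𝒜 ⥤ Πℬ` of a functor `U : 𝒜 ⥤ ℬ`, sending
`(Aᵢ)_{i∈I}` to `(U(Aᵢ))_{i∈I}`; it is the unique extension of `ι_ℬ ∘ U` along `ι_𝒜`. -/
def famMap (U : 𝒜 ⥤ ℬ) : FamObj.{v} 𝒜 ⥤ FamObj.{v} ℬ where
  obj X := ⟨X.I, fun i => U.obj (X.obj i)⟩
  map f := ⟨f.idx, fun j => U.map (f.hom j)⟩
  map_id X := FamHom.ext' rfl (heq_of_eq (funext fun j => U.map_id _))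
  map_comp f g := FamHom.ext' rfl (heq_of_eq (funext fun j => U.map_comp _ _))

/-!
A morphism `X ⟶ ι A` in `Π𝒜` is an index `i` of `X` together with a morphism `Xᵢ ⟶ A`. Over a
connected diagram the legs of a cone over `F ⋙ ι` are linked by morphisms, so they all pick the
same index `i`, and the cone is the projection `X ⟶ ι Xᵢ` followed by the image of a cone over `F`
with apex `Xᵢ`. This gives preservation of connected limits, and shows that the apex of a limit of
`F ⋙ ι` is isomorphic to the singleton on such an `Xᵢ`; as `ι` is fully faithful it therefore
creates connected limits. Conversely, a diagram `G` in `Π𝒜` has as limit the family indexed by the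
connected components of the category of elements of its index sets, whose member at a component
is the limit in `𝒜` of the restriction of `G` to that (connected) component.
-/

namespace FamHom

variable {X Y Z : FamObj.{v} 𝒜}

/-- The component of `f` at `j`, with its source transported along `f.idx j = i`, so that
equations between components need no `eqToHom`. -/
def homAt (f : X ⟶ Y) {i : X.I} {j : Y.I} (h : f.idx j = i) : X.obj i ⟶ Y.obj j :=
  eqToHom (congrArg X.obj h.symm) ≫ f.hom j

@[simp]
theorem homAt_rfl (f : X ⟶ Y) (j : Y.I) : f.homAt (rfl : f.idx j = f.idx j) = f.hom j :=
  Category.id_comp _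

theorem homAt_congr {f g : X ⟶ Y} (e : f = g) {i : X.I} {j : Y.I} (hf : f.idx j = i)
    (hg : g.idx j = i) : f.homAt hf = g.homAt hg := by
  subst e; rfl

theorem homAt_comp (f : X ⟶ Y) (g : Y ⟶ Z) {i : X.I} {j : Y.I} {k : Z.I} (hf : f.idx j = i)
    (hg : g.idx k = j) :
    (f ≫ g).homAt ((congrArg f.idx hg).trans hf) = f.homAt hf ≫ g.homAt hg := by
  subst hf hg
  show 𝟙 _ ≫ f.hom _ ≫ g.hom k = (𝟙 _ ≫ f.hom _) ≫ 𝟙 _ ≫ g.hom k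
  simp only [Category.id_comp]

theorem ext_homAt {f g : X ⟶ Y} (hidx : ∀ j, f.idx j = g.idx j)
    (hhom : ∀ j, f.homAt (hidx j) = g.hom j) : f = g := by
  obtain ⟨fi, fh⟩ := f
  obtain ⟨gi, gh⟩ := g
  obtain rfl : fi = gi := funext hidx
  congr
  funext j
  simpa [homAt] using hhom j

end FamHom

open FamHom

def famEmbeddingFullyFaithful : (famEmbedding : 𝒜 ⥤ FamObj.{v} 𝒜).FullyFaithful where
  preimage f := f.hom PUnit.unit

instance : (famEmbedding : 𝒜 ⥤ FamObj.{v} 𝒜).Full := famEmbeddingFullyFaithful.full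

instance : (famEmbedding : 𝒜 ⥤ FamObj.{v} 𝒜).Faithful := famEmbeddingFullyFaithful.faithful

/-- The projection of `X = ∏ᵢ ι Xᵢ` onto a factor. -/
def FamObj.proj (X : FamObj.{v} 𝒜) (i : X.I) : X ⟶ famEmbedding.obj (X.obj i) :=
  ⟨fun _ => i, fun _ => 𝟙 _⟩

theorem FamObj.proj_comp_map_homAt {X : FamObj.{v} 𝒜} {A : 𝒜} (f : X ⟶ famEmbedding.obj A)
    {i : X.I} (h : f.idx PUnit.unit = i) : X.proj i ≫ famEmbedding.map (f.homAt h) = f := by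
  subst h
  exact ext_homAt (fun _ => rfl) fun ⟨⟩ =>
    show 𝟙 _ ≫ 𝟙 _ ≫ 𝟙 _ ≫ f.hom _ = _ by simp only [Category.id_comp]

instance FamObj.epi_proj (X : FamObj.{v} 𝒜) (i : X.I) : Epi (X.proj i) where
  left_cancellation f g h :=
    ext_homAt (fun _ => rfl) fun j => by
      have := homAt_congr h (i := i) (j := j) rfl rfl
      change 𝟙 _ ≫ 𝟙 _ ≫ f.hom j = 𝟙 _ ≫ 𝟙 _ ≫ g.hom j at this
      show 𝟙 _ ≫ f.hom j = g.hom j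
      simpa using this

theorem homAt_comp_famEmbedding_map {X : FamObj.{v} 𝒜} {A B : 𝒜} (f : X ⟶ famEmbedding.obj A)
    (a : A ⟶ B) {i : X.I} (h : f.idx PUnit.unit = i) :
    (f ≫ famEmbedding.map a).homAt h = f.homAt h ≫ a :=
  (Category.assoc _ _ _).symm

section Connected

variable {D : Type v} [SmallCategory D] [IsConnected D] {F : D ⥤ 𝒜}

/-- The index picked out by the legs of a cone over `F ⋙ famEmbedding`; it is the same for all
legs by `idx_π_app`. -/
noncomputable def coneIdx (s : Cone (F ⋙ famEmbedding)) : s.pt.I :=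
  (s.π.app (Classical.arbitrary D)).idx PUnit.unit

theorem idx_π_app (s : Cone (F ⋙ famEmbedding)) (d : D) :
    (s.π.app d).idx PUnit.unit = coneIdx s := by
  refine constant_of_preserves_morphisms (α := s.pt.I) (fun d : D => (s.π.app d).idx PUnit.unit)
    (fun _ _ u => ?_) d _
  exact congrArg (fun f => f.idx PUnit.unit) (s.w u)

noncomputable abbrev coneDown (s : Cone (F ⋙ famEmbedding)) : Cone F where
  pt := s.pt.obj (coneIdx s)
  π :=
    { app d := (s.π.app d).homAt (idx_π_app s d)
      naturality d d' u := (Category.id_comp _).trans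
        ((homAt_comp_famEmbedding_map _ _ (idx_π_app s d)).symm.trans
          (homAt_congr (s.w u) _ (idx_π_app s d'))).symm }

theorem proj_comp_map_coneDown_π (s : Cone (F ⋙ famEmbedding)) (d : D) :
    s.pt.proj (coneIdx s) ≫ famEmbedding.map ((coneDown s).π.app d) = s.π.app d :=
  FamObj.proj_comp_map_homAt _ (idx_π_app s d)

noncomputable def isLimitFamEmbeddingMapCone {c : Cone F} (hc : IsLimit c) :
    IsLimit (famEmbedding.mapCone c) where
  lift s := s.pt.proj (coneIdx s) ≫ famEmbedding.map (hc.lift (coneDown s))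
  fac s d := by
    rw [Functor.mapCone_π_app, Category.assoc, ← Functor.map_comp, hc.fac,
      proj_comp_map_coneDown_π]
  uniq s m hm := by
    have hidx : m.idx PUnit.unit = coneIdx s :=
      (congrArg (fun f => f.idx PUnit.unit) (hm (Classical.arbitrary D))).trans (idx_π_app s _)
    rw [← FamObj.proj_comp_map_homAt m hidx]
    refine congrArg _ (congrArg _ (hc.uniq (coneDown s) _ fun d => ?_))
    exact (homAt_comp_famEmbedding_map _ _ _).symm.trans (homAt_congr (hm d) _ (idx_π_app s d))

instance : PreservesLimitsOfShape D (famEmbedding : 𝒜 ⥤ FamObj.{v} 𝒜) where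
  preservesLimit := ⟨fun hc => ⟨isLimitFamEmbeddingMapCone hc⟩⟩

instance isIso_lift_mapCone_coneDown {l : Cone (F ⋙ famEmbedding)} (hl : IsLimit l) :
    IsIso (hl.lift (famEmbedding.mapCone (coneDown l))) := by
  have hsection : l.pt.proj (coneIdx l) ≫ hl.lift (famEmbedding.mapCone (coneDown l)) = 𝟙 _ :=
    hl.hom_ext fun d => by
      rw [Category.assoc, hl.fac, Category.id_comp]
      exact proj_comp_map_coneDown_π l d
  refine ⟨l.pt.proj (coneIdx l), ?_, hsection⟩
  rw [← cancel_epi (l.pt.proj (coneIdx l)), reassoc_of% hsection]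
  exact (Category.comp_id _).symm

noncomputable instance : CreatesLimitsOfShape D (famEmbedding : 𝒜 ⥤ FamObj.{v} 𝒜) where
  CreatesLimit := createsLimitOfReflectsIso fun l hl =>
    { liftedCone := coneDown l
      validLift := Cone.ext (asIso (hl.lift _)) fun d => (hl.fac _ d).symm
      makesLimit := isLimitOfReflects famEmbedding (IsLimit.ofPointIso hl) }

end Connected

section Limits

variable {D : Type v} [SmallCategory D] (G : D ⥤ FamObj.{v} 𝒜)

/-- The category of elements of the index sets of `G`: an arrow `(d, j) ⟶ (d', j')` is an arrow
`u : d ⟶ d'` whose index map sends `j'` to `j`. -/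
structure IdxElements : Type v where
  fst : D
  snd : (G.obj fst).I

instance : SmallCategory (IdxElements G) where
  Hom e e' := { u : e.fst ⟶ e'.fst // (G.map u).idx e'.snd = e.snd }
  id e := ⟨𝟙 e.fst, congrArg (fun φ : G.obj e.fst ⟶ G.obj e.fst => φ.idx e.snd) (G.map_id _)⟩
  comp {e _ e''} f g := ⟨f.val ≫ g.val,
    (congrArg (fun φ : G.obj e.fst ⟶ G.obj e''.fst => φ.idx e''.snd) (G.map_comp _ _)).trans
      ((congrArg _ g.property).trans f.property)⟩
  id_comp _ := Subtype.ext (Category.id_comp _)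
  comp_id _ := Subtype.ext (Category.comp_id _)
  assoc _ _ _ := Subtype.ext (Category.assoc _ _ _)

def IdxElements.homMk {d d' : D} (u : d ⟶ d') (j : (G.obj d').I) :
    (⟨d, (G.map u).idx j⟩ : IdxElements G) ⟶ ⟨d', j⟩ :=
  ⟨u, rfl⟩

def IdxElements.diagram : IdxElements G ⥤ 𝒜 where
  obj e := (G.obj e.fst).obj e.snd
  map f := (G.map f.val).homAt f.property
  map_id e := (homAt_congr (G.map_id e.fst) _ rfl).trans (Category.comp_id _)
  map_comp f g :=
    (homAt_congr (G.map_comp f.val g.val) _ _).trans (homAt_comp _ _ f.property g.property)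

def componentDiagram (x : ConnectedComponents (IdxElements G)) : x.Component ⥤ 𝒜 :=
  ConnectedComponents.ι x ⋙ IdxElements.diagram G

variable {G}

theorem idx_π_app_eq_of_hom (s : Cone G) {e e' : IdxElements G} (f : e ⟶ e') :
    (s.π.app e.fst).idx e.snd = (s.π.app e'.fst).idx e'.snd :=
  (congrArg (s.π.app e.fst).idx f.property).symm.trans
    (congrArg (fun φ : s.pt ⟶ G.obj e'.fst => φ.idx e'.snd) (s.w f.val))

/-- The index map of the comparison morphism into `limitFam G`: the legs of a cone pick out the
same index along every arrow of `IdxElements G`, hence on every connected component. -/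
def liftIdx (s : Cone G) : ConnectedComponents (IdxElements G) → s.pt.I :=
  ConnectedComponents.liftFunctor _
    { obj e := ⟨(s.π.app e.fst).idx e.snd⟩
      map f := eqToHom (congrArg Discrete.mk (idx_π_app_eq_of_hom s f)) }

theorem idx_π_app_eq_liftIdx (s : Cone G) {x : ConnectedComponents (IdxElements G)}
    (e : x.Component) : (s.π.app e.obj.fst).idx e.obj.snd = liftIdx s x :=
  congrArg (liftIdx s) e.property

def componentCone (s : Cone G) (x : ConnectedComponents (IdxElements G)) :
    Cone (componentDiagram G x) where
  pt := s.pt.obj (liftIdx s x)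
  π :=
    { app e := (s.π.app e.obj.fst).homAt (idx_π_app_eq_liftIdx s e)
      naturality e _ f := (Category.id_comp _).trans
        ((homAt_comp _ _ (idx_π_app_eq_liftIdx s e) f.hom.property).symm.trans
          (homAt_congr (s.w f.hom.val) _ _)).symm }

variable (G) [∀ x, HasLimit (componentDiagram G x)]

/-- The limit of `G`: one member for each connected component of `IdxElements G`, namely the
limit of `G` restricted to that component. -/
noncomputable abbrev limitFam : FamObj.{v} 𝒜 :=
  ⟨ConnectedComponents (IdxElements G), fun x => limit (componentDiagram G x)⟩

noncomputable def limitFamπ (d : D) : limitFam G ⟶ G.obj d :=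
  ⟨fun j => CategoryTheory.ConnectedComponents.mk ⟨d, j⟩, fun j =>
    limit.π (componentDiagram G (CategoryTheory.ConnectedComponents.mk ⟨d, j⟩)) ⟨⟨d, j⟩, rfl⟩⟩

theorem limitFamπ_homAt {d : D} {j : (G.obj d).I} {x : ConnectedComponents (IdxElements G)}
    (h : CategoryTheory.ConnectedComponents.mk ⟨d, j⟩ = x) :
    (limitFamπ G d).homAt h = limit.π (componentDiagram G x) ⟨⟨d, j⟩, h⟩ := by
  subst h
  exact homAt_rfl _ _

noncomputable def limitFamCone : Cone G where
  pt := limitFam G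
  π :=
    { app := limitFamπ G
      naturality d d' u := by
        have hidx : ∀ j, (limitFamπ G d).idx ((G.map u).idx j) = (limitFamπ G d').idx j :=
          fun j => Quotient.sound (s := Zigzag.setoid _) (Zigzag.of_hom (IdxElements.homMk G u j))
        refine (Category.id_comp _).trans (ext_homAt hidx fun j => ?_).symm
        refine (homAt_comp _ _ (hidx j) rfl).trans ?_
        exact (congrArg (· ≫ _) (limitFamπ_homAt G (hidx j))).trans
          (limit.w (componentDiagram G _) (j := ⟨_, hidx j⟩) (j' := ⟨⟨d', j⟩, rfl⟩)
            (ObjectProperty.homMk (IdxElements.homMk G u j))) }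

variable {G}

noncomputable def limitFamLift (s : Cone G) : s.pt ⟶ limitFam G :=
  ⟨liftIdx s, fun x => limit.lift _ (componentCone s x)⟩

variable (G)

noncomputable def isLimitLimitFamCone : IsLimit (limitFamCone G) where
  lift := limitFamLift
  fac s d := ext_homAt (fun _ => rfl) fun j => by
    refine (homAt_rfl _ _).trans ?_
    exact (limit.lift_π (componentCone s (CategoryTheory.ConnectedComponents.mk ⟨d, j⟩))
      ⟨⟨d, j⟩, rfl⟩).trans (homAt_rfl _ _)
  uniq s m hm := by
    have hidx : ∀ x, m.idx x = liftIdx s x :=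
      Quotient.ind fun e => congrArg (fun φ : s.pt ⟶ G.obj e.fst => φ.idx e.snd) (hm e.fst)
    refine ext_homAt hidx fun (x : ConnectedComponents (IdxElements G)) =>
      limit.hom_ext fun ⟨e, he⟩ => ?_
    subst he
    have hm_e : m.homAt (hidx _) ≫ (limitFamπ G e.fst).homAt rfl =
        (s.π.app e.fst).homAt (idx_π_app_eq_liftIdx s ⟨e, rfl⟩) :=
      (homAt_comp _ _ (hidx _) rfl).symm.trans (homAt_congr (hm e.fst) _ _)
    exact (congrArg (_ ≫ ·) (limitFamπ_homAt G rfl).symm).trans (hm_e.trans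
      (limit.lift_π (componentCone s (CategoryTheory.ConnectedComponents.mk e)) ⟨e, rfl⟩).symm)

end Limits

/-- **The embedding into the free product completion creates connected limits.**
For every small connected category `D` and diagram `F : D ⥤ 𝒜`:
* if `c` is a limit cone of `F` in `𝒜` then the singleton family `ι_𝒜(lim F)` is a
  limit of `ι_𝒜 ∘ F` in `Π𝒜` (i.e. `ι_𝒜` maps limit cones to limit cones), and
* a connected cone in `𝒜` whose image under `ι_𝒜` is limiting is already limiting.
Moreover `Π𝒜` has all small limits if and only if `𝒜` has all small connected
limits. -/
theorem famEmbedding_creates_connected_limits :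
    (∀ (D : Type v) [SmallCategory D] [CategoryTheory.IsConnected D]
        (F : D ⥤ 𝒜) (c : Cone F), Nonempty (IsLimit c) →
        Nonempty (IsLimit ((famEmbedding : 𝒜 ⥤ FamObj.{v} 𝒜).mapCone c))) ∧
    (∀ (D : Type v) [SmallCategory D] [CategoryTheory.IsConnected D]
        (F : D ⥤ 𝒜) (c : Cone F),
        Nonempty (IsLimit ((famEmbedding : 𝒜 ⥤ FamObj.{v} 𝒜).mapCone c)) →
        Nonempty (IsLimit c)) ∧
    (HasLimitsOfSize.{v, v} (FamObj.{v} 𝒜) ↔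
        ∀ (D : Type v) [SmallCategory D] [CategoryTheory.IsConnected D],
          HasLimitsOfShape D 𝒜) := by
  refine ⟨fun D _ _ F c ⟨hc⟩ => ⟨isLimitOfPreserves famEmbedding hc⟩,
    fun D _ _ F c ⟨hc⟩ => ⟨isLimitOfReflects famEmbedding hc⟩, fun _ D _ _ => ?_, fun _ => ?_⟩
  · exact ⟨fun F => hasLimit_of_created F famEmbedding⟩
  · exact ⟨fun D _ => ⟨fun G => HasLimit.mk ⟨_, isLimitLimitFamCone G⟩⟩⟩

end Diers
end

section
/- For a functor U : 𝒜 ⥤ ℬ, the following are equivalent: (1) U is a right multi-adjoint; (2) U has a relative left adjoint along ι_𝒜, i.e. there is a functor L : ℬ ⥤ Π𝒜 with natural isomorphisms Π𝒜(L(B), ι_𝒜(A)) ≅ ℬ(B, U(A)) for all B in ℬ and A in 𝒜; (3) the free product extension ΠU : Π𝒜 ⥤ Πℬ (sending (A_i)_{i∈I} to (U(A_i))_{i∈I}) has a left adjoint. -/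
open CategoryTheory CategoryTheory.Limits

universe v u₁ u₂

namespace Diers

variable {𝒜 : Type u₁} {ℬ : Type u₂} [Category.{v} 𝒜] [Category.{v} ℬ]

/-- `U` has a *relative left adjoint along `ι_𝒜`* if there is a functor `L : ℬ ⥤ Π𝒜`
with bijections `Π𝒜(L(B), ι_𝒜(A)) ≅ ℬ(B, U(A))` natural in `B` and `A`. -/
def HasRelativeLeftAdjointAlongEmbedding (U : 𝒜 ⥤ ℬ) : Prop :=
  ∃ (L : ℬ ⥤ FamObj.{v} 𝒜)
    (e : ∀ (B : ℬ) (A : 𝒜), (L.obj B ⟶ famEmbedding.obj A) ≃ (B ⟶ U.obj A)),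
    (∀ (B : ℬ) {A A' : 𝒜} (u : A ⟶ A') (φ : L.obj B ⟶ famEmbedding.obj A),
        e B A' (φ ≫ famEmbedding.map u) = e B A φ ≫ U.map u) ∧
    (∀ {B B' : ℬ} (g : B ⟶ B') {A : 𝒜} (φ : L.obj B' ⟶ famEmbedding.obj A),
        e B A (L.map g ≫ φ) = g ≫ e B' A φ)

/-! A morphism from a family `X` to a singleton `ι_𝒜(A)` is just an index `i` together with
an arrow `Xᵢ ⟶ A`. Hence each of the three conditions amounts to giving, for every `B : ℬ`,
a family `(ηᵢ : B ⟶ U(Xᵢ))ᵢ` through which every arrow `B ⟶ U(A)` factors as `ηᵢ ≫ U(f)` for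
a unique pair `(i, f)`. For (3), the left adjoint of `ΠU` sends a family `(Bⱼ)ⱼ` to the
concatenation of the families attached to the `Bⱼ`: a morphism `(Bⱼ)ⱼ ⟶ ΠU(Aₖ)ₖ` chooses for
every `k` an index `j` and an arrow `Bⱼ ⟶ U(Aₖ)`. -/

def famHomEquiv (X Y : FamObj.{v} 𝒜) : (X ⟶ Y) ≃ ∀ j : Y.I, Σ i : X.I, X.obj i ⟶ Y.obj j where
  toFun f j := ⟨f.idx j, f.hom j⟩
  invFun s := ⟨fun j => (s j).1, fun j => (s j).2⟩
  left_inv _ := rfl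
  right_inv _ := rfl

def famHomEmbeddingEquiv (X : FamObj.{v} 𝒜) (A : 𝒜) :
    (X ⟶ famEmbedding.obj A) ≃ Σ i : X.I, X.obj i ⟶ A where
  toFun φ := ⟨φ.idx PUnit.unit, φ.hom PUnit.unit⟩
  invFun p := ⟨fun _ => p.1, fun _ => p.2⟩
  left_inv _ := rfl
  right_inv _ := rfl

def fullyFaithfulFamEmbedding : (famEmbedding : 𝒜 ⥤ FamObj.{v} 𝒜).FullyFaithful where
  preimage f := f.hom PUnit.unit
  map_preimage _ := rfl
  preimage_map _ := rfl

def IsMultiUniversal (U : 𝒜 ⥤ ℬ) {B : ℬ} (X : FamObj.{v} 𝒜) (η : ∀ i, B ⟶ U.obj (X.obj i)) :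
    Prop :=
  ∀ A : 𝒜, Function.Bijective fun p : Σ i : X.I, X.obj i ⟶ A => η p.1 ≫ U.map p.2

theorem isMultiInitialFamily_mk_iff {U : 𝒜 ⥤ ℬ} {B : ℬ} (X : FamObj.{v} 𝒜)
    (η : ∀ i, B ⟶ U.obj (X.obj i)) :
    IsMultiInitialFamily (fun i => StructuredArrow.mk (η i)) ↔ IsMultiUniversal U X η := by
  have right_injective : ∀ {C : StructuredArrow B U},
      Function.Injective fun q : Σ i, StructuredArrow.mk (η i) ⟶ C =>
        (⟨q.1, q.2.right⟩ : Σ i, X.obj i ⟶ C.right) := by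
    rintro C ⟨i, u⟩ ⟨i', u'⟩ h
    obtain ⟨rfl, h⟩ := Sigma.mk.inj_iff.1 h
    rw [StructuredArrow.hom_ext u u' (eq_of_heq h)]
  simp only [IsMultiUniversal, Function.bijective_iff_existsUnique]
  constructor
  · intro h A g
    obtain ⟨⟨i, u⟩, hu⟩ := h (StructuredArrow.mk g)
    refine ⟨⟨i, u.right⟩, by simpa using StructuredArrow.w u, fun ⟨i', f⟩ hf => ?_⟩
    exact congrArg (fun q => (⟨q.1, q.2.right⟩ : Σ i, X.obj i ⟶ A))
      (hu ⟨i', StructuredArrow.homMk f hf⟩)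
  · intro h C
    obtain ⟨⟨i, f⟩, hf, huniq⟩ := h C.right C.hom
    refine ⟨⟨i, StructuredArrow.homMk f hf⟩, fun ⟨i', u⟩ => right_injective ?_⟩
    exact huniq ⟨i', u.right⟩ (by simpa using StructuredArrow.w u)

theorem isRightMultiAdjoint_iff_forall_exists_isMultiUniversal (U : 𝒜 ⥤ ℬ) :
    IsRightMultiAdjoint U ↔
      ∀ B : ℬ, ∃ (X : FamObj.{v} 𝒜) (η : ∀ i, B ⟶ U.obj (X.obj i)), IsMultiUniversal U X η := by
  refine forall_congr' fun B => ⟨fun ⟨I, n, hn⟩ => ?_, fun ⟨X, η, hη⟩ => ?_⟩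
  · exact ⟨⟨I, fun i => (n i).right⟩, fun i => (n i).hom, (isMultiInitialFamily_mk_iff _ _).1 hn⟩
  · exact ⟨X.I, _, (isMultiInitialFamily_mk_iff X η).2 hη⟩

theorem IsRightMultiAdjoint.famMap_isRightAdjoint {U : 𝒜 ⥤ ℬ} (h : IsRightMultiAdjoint U) :
    (famMap U).IsRightAdjoint := by
  choose X η hη using (isRightMultiAdjoint_iff_forall_exists_isMultiUniversal U).1 h
  let concat (Y : FamObj.{v} ℬ) : FamObj.{v} 𝒜 :=
    ⟨Σ j, (X (Y.obj j)).I, fun p => (X (Y.obj p.1)).obj p.2⟩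
  let e (Y : FamObj.{v} ℬ) (Z : FamObj.{v} 𝒜) : (concat Y ⟶ Z) ≃ (Y ⟶ (famMap U).obj Z) :=
    (famHomEquiv _ _).trans <| (Equiv.piCongrRight fun k => (Equiv.sigmaAssoc _).trans <|
      Equiv.sigmaCongrRight fun j => Equiv.ofBijective _ (hη (Y.obj j) (Z.obj k))).trans
        (famHomEquiv Y ((famMap U).obj Z)).symm
  refine ⟨_, ⟨Adjunction.adjunctionOfEquivLeft e fun Y Z Z' g f => ?_⟩⟩
  exact FamHom.ext' rfl (heq_of_eq (funext fun k =>
    (congrArg (_ ≫ ·) (U.map_comp _ _)).trans (Category.assoc _ _ _).symm))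

theorem hasRelativeLeftAdjointAlongEmbedding_of_isRightAdjoint {U : 𝒜 ⥤ ℬ}
    [(famMap U).IsRightAdjoint] : HasRelativeLeftAdjointAlongEmbedding U := by
  let adj := Adjunction.ofIsRightAdjoint (famMap U)
  refine ⟨famEmbedding ⋙ (famMap U).leftAdjoint, fun B A =>
    (adj.homEquiv _ _).trans (fullyFaithfulFamEmbedding.homEquiv (X := B) (Y := U.obj A)).symm,
    ?_, ?_⟩
  · intro B A A' u φ
    exact congrArg (fullyFaithfulFamEmbedding.homEquiv (X := B) (Y := U.obj A')).symm
      (adj.homEquiv_naturality_right φ (famEmbedding.map u))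
  · intro B B' g A φ
    exact congrArg (fullyFaithfulFamEmbedding.homEquiv (X := B) (Y := U.obj A)).symm
      (adj.homEquiv_naturality_left (famEmbedding.map g) φ)

theorem HasRelativeLeftAdjointAlongEmbedding.isRightMultiAdjoint {U : 𝒜 ⥤ ℬ}
    (h : HasRelativeLeftAdjointAlongEmbedding U) : IsRightMultiAdjoint U := by
  obtain ⟨L, e, he, -⟩ := h
  refine (isRightMultiAdjoint_iff_forall_exists_isMultiUniversal U).2 fun B => ?_
  let E := famHomEmbeddingEquiv (L.obj B)
  refine ⟨L.obj B, fun i => e B _ ((E _).symm ⟨i, 𝟙 _⟩), fun A => ?_⟩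
  have factor : (fun p : Σ i, (L.obj B).obj i ⟶ A => e B _ ((E _).symm ⟨p.1, 𝟙 _⟩) ≫ U.map p.2)
      = e B A ∘ (E A).symm := by
    funext ⟨i, f⟩
    rw [← he]
    exact congrArg (e B A) (FamHom.ext' rfl (heq_of_eq (funext fun _ => Category.id_comp f)))
  rw [factor]
  exact (e B A).bijective.comp (E A).symm.bijective

/-- **Right multi-adjoints via the free product completion.**
For a functor `U : 𝒜 ⥤ ℬ` the following are equivalent: (1) `U` is a right
multi-adjoint; (2) `U` has a relative left adjoint along `ι_𝒜 : 𝒜 ↪ Π𝒜`;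
(3) the free product extension `ΠU : Π𝒜 ⥤ Πℬ` has a left adjoint. -/
theorem isRightMultiAdjoint_iff_relative_iff_famMap_rightAdjoint (U : 𝒜 ⥤ ℬ) :
    (IsRightMultiAdjoint U ↔ HasRelativeLeftAdjointAlongEmbedding U) ∧
    (IsRightMultiAdjoint U ↔ (famMap U).IsRightAdjoint) := by
  have of_isRightAdjoint : (famMap U).IsRightAdjoint → HasRelativeLeftAdjointAlongEmbedding U :=
    fun _ => hasRelativeLeftAdjointAlongEmbedding_of_isRightAdjoint
  exact ⟨⟨fun h => of_isRightAdjoint h.famMap_isRightAdjoint,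
      HasRelativeLeftAdjointAlongEmbedding.isRightMultiAdjoint⟩,
    ⟨IsRightMultiAdjoint.famMap_isRightAdjoint,
      fun h => (of_isRightAdjoint h).isRightMultiAdjoint⟩⟩

end Diers
end

section
/- Let (ℒ, ℛ) be an orthogonality structure on a category 𝒞 with coequalizers. If a parallel pair a, a' : C ⇉ D in 𝒞 is equalized by a morphism l : B → C belonging to ℒ (i.e. a ∘ l = a' ∘ l), then the coequalizer q : D → coeq(a,a') belongs to ℒ. -/
open CategoryTheory CategoryTheory.Limits

universe v u₁

namespace Diers

variable {𝒞 : Type u₁} [Category.{v} 𝒞]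

/-- `l` is *orthogonal* to `r` (`l ⊥ r`) if every commutative square `u ≫ r = l ≫ v`
admits a unique diagonal filler `d` with `l ≫ d = u` and `d ≫ r = v`. -/
def Orthogonal {A B X Y : 𝒞} (l : A ⟶ B) (r : X ⟶ Y) : Prop :=
  ∀ (u : A ⟶ X) (v : B ⟶ Y), u ≫ r = l ≫ v → ∃! d : B ⟶ X, l ≫ d = u ∧ d ≫ r = v

/-- An *orthogonality structure* `(ℒ, ℛ)` on `𝒞`: two classes of morphisms with
`ℒ = ^⊥ℛ` (the morphisms left orthogonal to every member of `ℛ`) and `ℛ = ℒ^⊥`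
(the morphisms right orthogonal to every member of `ℒ`). -/
structure OrthStructure (𝒞 : Type u₁) [Category.{v} 𝒞] where
  IsL : MorphismProperty 𝒞
  IsR : MorphismProperty 𝒞
  isL_iff : ∀ {A B : 𝒞} (l : A ⟶ B),
      IsL l ↔ ∀ {X Y : 𝒞} (r : X ⟶ Y), IsR r → Orthogonal l r
  isR_iff : ∀ {X Y : 𝒞} (r : X ⟶ Y),
      IsR r ↔ ∀ {A B : 𝒞} (l : A ⟶ B), IsL l → Orthogonal l r

namespace Orthogonal

variable {A B X Y : 𝒞} {l : A ⟶ B} {r : X ⟶ Y}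

-- `f` and `g` are both diagonal fillers of the square with sides `l ≫ f` and `f ≫ r`.
theorem hom_ext (hlr : Orthogonal l r) {f g : B ⟶ X} (hl : l ≫ f = l ≫ g)
    (hr : f ≫ r = g ≫ r) : f = g := by
  obtain ⟨d, -, hd⟩ := hlr (l ≫ f) (f ≫ r) (Category.assoc _ _ _)
  rw [hd f ⟨rfl, rfl⟩, hd g ⟨hl.symm, hr.symm⟩]

theorem coequalizer_π {C : 𝒞} {a a' : B ⟶ C} [HasCoequalizer a a'] (hlr : Orthogonal l r)
    (h : l ≫ a = l ≫ a') : Orthogonal (coequalizer.π a a') r := by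
  intro u v hsq
  have hu : a ≫ u = a' ≫ u := hlr.hom_ext (by rw [reassoc_of% h]) <| by
    rw [Category.assoc, Category.assoc, hsq, coequalizer.condition_assoc]
  refine ⟨coequalizer.desc u hu, ⟨coequalizer.π_desc u hu, ?_⟩, ?_⟩
  · exact coequalizer.hom_ext (by rw [coequalizer.π_desc_assoc, hsq])
  · rintro d ⟨hπd, -⟩
    exact coequalizer.hom_ext (by rw [hπd, coequalizer.π_desc])

end Orthogonal

/-- **Coequalizers of pairs equalized by a left map are left maps.**
Let `(ℒ, ℛ)` be an orthogonality structure on a category `𝒞` with coequalizers. If the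
parallel pair `a, a' : C ⇉ D` is equalized by a morphism `l : B ⟶ C` of `ℒ`
(`a ∘ l = a' ∘ l`), then the coequalizer `q : D ⟶ coeq(a, a')` belongs to `ℒ`. -/
theorem coequalizer_mem_left_class [HasCoequalizers 𝒞] (S : OrthStructure 𝒞)
    {B C D : 𝒞} (a a' : C ⟶ D) (l : B ⟶ C)
    (hl : S.IsL l) (h : l ≫ a = l ≫ a') :
    S.IsL (coequalizer.π a a') :=
  (S.isL_iff _).2 fun r hr => ((S.isL_iff l).1 hl r hr).coequalizer_π h

end Diers
end
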